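/- Let y, b ∈ W^{1,1}(0,T) and g ∈ C(ℝ) satisfy y'(t) = g(y(t)) + b'(t) almost everywhere on [0,T] with y(0) = y⁰. Assume g(ξ) → -∞ as ξ → ∞, and that there exist constants N₀ ≥ 0, N₁ ≥ 0 with b(t₂) - b(t₁) ≤ N₀ + N₁(t₂ - t₁) for all 0 ≤ t₁ < t₂ ≤ T. If ξ₀ is a constant such that g(ξ) ≤ -N₁ for all ξ ≥ ξ₀, then y(t) ≤ max{y⁰, ξ₀} + N₀ for all t ∈ [0,T]. -/

import Mathlib

open MeasureTheory Set Filter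

/-! If `y t > max (y 0) ξ₀ + N₀`, let `t₁` be the last time before `t` with
`y t₁ ≤ max (y 0) ξ₀`. On `(t₁, t]` we have `y ≥ ξ₀`, hence `y' ≤ b' - N₁`, and integrating
over `(t₁, t]` against the growth bound on `b` gives `y t - y t₁ ≤ N₀`, a contradiction. -/

theorem ContinuousOn.exists_le_and_forall_Ioc_lt {α β : Type*} [ConditionallyCompleteLinearOrder α]
    [TopologicalSpace α] [OrderTopology α] [LinearOrder β] [TopologicalSpace β]
    [OrderClosedTopology β] {f : α → β} {a t : α} {M : β} (hf : ContinuousOn f (Icc a t))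
    (hat : a ≤ t) (ha : f a ≤ M) (ht : M < f t) :
    ∃ s ∈ Ico a t, f s ≤ M ∧ ∀ u ∈ Ioc s t, M < f u := by
  set S := Icc a t ∩ f ⁻¹' Iic M
  have hbdd : BddAbove S := ⟨t, fun u hu => hu.1.2⟩
  obtain ⟨⟨has, hst⟩, hs⟩ : sSup S ∈ S :=
    (hf.preimage_isClosed_of_isClosed isClosed_Icc isClosed_Iic).csSup_mem
      ⟨a, ⟨le_rfl, hat⟩, ha⟩ hbdd
  refine ⟨sSup S, ⟨has, hst.lt_of_ne ?_⟩, hs, fun u hu => ?_⟩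
  · intro h
    exact (ht.trans_le (h ▸ hs)).false
  · by_contra! hle
    exact hu.1.not_ge (le_csSup hbdd ⟨⟨has.trans hu.1.le, hu.2⟩, hle⟩)

section Primitive

variable {y f : ℝ → ℝ} {a T : ℝ}

theorem continuousOn_of_eq_add_integral (hf : IntegrableOn f (Icc a T))
    (hy : ∀ t ∈ Icc a T, y t = y a + ∫ s in Ioc a t, f s) : ContinuousOn y (Icc a T) :=
  (continuousOn_const.add (intervalIntegral.continuousOn_primitive hf)).congr hy

theorem sub_eq_setIntegral_Ioc_of_eq_add_integral (hf : IntegrableOn f (Icc a T))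
    (hy : ∀ t ∈ Icc a T, y t = y a + ∫ s in Ioc a t, f s) {s t : ℝ} (has : a ≤ s) (hst : s ≤ t)
    (ht : t ≤ T) : y t - y s = ∫ u in Ioc s t, f u := by
  have hint : ∀ r ∈ Icc a T, IntervalIntegrable f volume a r := fun r hr =>
    (hf.mono_set (uIcc_of_le hr.1 ▸ Icc_subset_Icc_right hr.2)).intervalIntegrable
  rw [hy t ⟨has.trans hst, ht⟩, hy s ⟨has, hst.trans ht⟩, ← intervalIntegral.integral_of_le hst,
    ← intervalIntegral.integral_of_le (has.trans hst), ← intervalIntegral.integral_of_le has,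
    ← intervalIntegral.integral_interval_sub_left (hint t ⟨has.trans hst, ht⟩)
      (hint s ⟨has, hst.trans ht⟩)]
  ring

end Primitive

theorem setIntegral_Ioc_le_sub_mul_of_ae_le_sub {f g : ℝ → ℝ} {s t c : ℝ} (hst : s ≤ t)
    (hf : IntegrableOn f (Ioc s t)) (hg : IntegrableOn g (Ioc s t))
    (hle : ∀ᵐ u, u ∈ Ioc s t → f u ≤ g u - c) :
    ∫ u in Ioc s t, f u ≤ (∫ u in Ioc s t, g u) - c * (t - s) := by
  have hc : IntegrableOn (fun _ => c) (Ioc s t) := integrableOn_const measure_Ioc_lt_top.ne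
  calc ∫ u in Ioc s t, f u ≤ ∫ u in Ioc s t, (g u - c) :=
        setIntegral_mono_ae_restrict hf (hg.sub hc) ((ae_restrict_iff' measurableSet_Ioc).2 hle)
    _ = (∫ u in Ioc s t, g u) - c * (t - s) := by
        rw [integral_sub hg hc, setIntegral_const, Real.volume_real_Ioc_of_le hst, smul_eq_mul,
          mul_comm]

theorem zlotnik_inequality_general
    (T : ℝ)
    (y b y' b' : ℝ → ℝ) (g : ℝ → ℝ)
    (hy'int : IntegrableOn y' (Icc 0 T))
    (hb'int : IntegrableOn b' (Icc 0 T))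
    (hy : ∀ t ∈ Icc (0 : ℝ) T, y t = y 0 + ∫ s in Ioc (0 : ℝ) t, y' s)
    (hb : ∀ t ∈ Icc (0 : ℝ) T, b t = b 0 + ∫ s in Ioc (0 : ℝ) t, b' s)
    (hode : ∀ᵐ t, t ∈ Icc (0 : ℝ) T → y' t = g (y t) + b' t)
    (N₀ N₁ : ℝ) (hN₀ : 0 ≤ N₀)
    (hbineq : ∀ t₁ t₂ : ℝ, 0 ≤ t₁ → t₁ < t₂ → t₂ ≤ T →
      b t₂ - b t₁ ≤ N₀ + N₁ * (t₂ - t₁))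
    (ξ₀ : ℝ) (hξ₀ : ∀ ξ, ξ₀ ≤ ξ → g ξ ≤ -N₁) :
    ∀ t ∈ Icc (0 : ℝ) T, y t ≤ max (y 0) ξ₀ + N₀ := by
  intro t ⟨ht0, htT⟩
  by_contra! hcon
  obtain ⟨t₁, ⟨ht₁0, ht₁t⟩, hyt₁, hlarge⟩ :=
    ((continuousOn_of_eq_add_integral hy'int hy).mono
      (Icc_subset_Icc_right htT)).exists_le_and_forall_Ioc_lt ht0 (le_max_left (y 0) ξ₀)
        (by linarith)
  have hsub : Ioc t₁ t ⊆ Icc 0 T := fun u hu => ⟨ht₁0.trans hu.1.le, hu.2.trans htT⟩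
  have hdrift : ∀ᵐ u, u ∈ Ioc t₁ t → y' u ≤ b' u - N₁ := by
    filter_upwards [hode] with u hode_u hu
    rw [hode_u (hsub hu)]
    linarith [hξ₀ (y u) ((le_max_right _ _).trans (hlarge u hu).le)]
  have hincr := setIntegral_Ioc_le_sub_mul_of_ae_le_sub ht₁t.le (hy'int.mono_set hsub)
    (hb'int.mono_set hsub) hdrift
  rw [← sub_eq_setIntegral_Ioc_of_eq_add_integral hy'int hy ht₁0 ht₁t.le htT,
    ← sub_eq_setIntegral_Ioc_of_eq_add_integral hb'int hb ht₁0 ht₁t.le htT] at hincr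
  linarith [hbineq t₁ t ht₁0 ht₁t htT]

/-- **Zlotnik's inequality.** If `y, b ∈ W^{1,1}(0,T)` (absolutely continuous with
integrable derivatives `y', b'`), `g` is continuous, `y' = g(y) + b'` a.e. on `[0,T]`,
`g(ξ) → -∞` as `ξ → ∞`, `b(t₂) - b(t₁) ≤ N₀ + N₁(t₂ - t₁)` for `0 ≤ t₁ < t₂ ≤ T`
with `N₀, N₁ ≥ 0`, and `g(ξ) ≤ -N₁` for all `ξ ≥ ξ₀`, then
`y(t) ≤ max{y(0), ξ₀} + N₀` on `[0,T]`. -/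
theorem zlotnik_inequality
    (T : ℝ) (hT : 0 < T)
    (y b y' b' : ℝ → ℝ) (g : ℝ → ℝ) (hg : Continuous g)
    (hy'int : IntegrableOn y' (Icc 0 T))
    (hb'int : IntegrableOn b' (Icc 0 T))
    (hy : ∀ t ∈ Icc (0 : ℝ) T, y t = y 0 + ∫ s in Ioc (0 : ℝ) t, y' s)
    (hb : ∀ t ∈ Icc (0 : ℝ) T, b t = b 0 + ∫ s in Ioc (0 : ℝ) t, b' s)
    (hode : ∀ᵐ t, t ∈ Icc (0 : ℝ) T → y' t = g (y t) + b' t)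
    (hglim : Tendsto g atTop atBot)
    (N₀ N₁ : ℝ) (hN₀ : 0 ≤ N₀) (hN₁ : 0 ≤ N₁)
    (hbineq : ∀ t₁ t₂ : ℝ, 0 ≤ t₁ → t₁ < t₂ → t₂ ≤ T →
      b t₂ - b t₁ ≤ N₀ + N₁ * (t₂ - t₁))
    (ξ₀ : ℝ) (hξ₀ : ∀ ξ, ξ₀ ≤ ξ → g ξ ≤ -N₁) :
    ∀ t ∈ Icc (0 : ℝ) T, y t ≤ max (y 0) ξ₀ + N₀ :=
  zlotnik_inequality_general T y b y' b' g hy'int hb'int hy hb hode N₀ N₁ hN₀ hbineq ξ₀ hξ₀
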